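/- Let F be subexponential and c > 1. Then there exists an increasing concave function h(x) → ∞ with h(x) ≤ x/2 for large x, and a constant x₁ > 0, such that for all x ≥ x₁: J(x, h(x)) ≤ c F̄(h(x)) and K(x, h(x)) ≤ F̄(h(x)). -/
import Mathlib

open Filter MeasureTheory Set
open scoped ENNReal

noncomputable def tail (μ : Measure ℝ) (x : ℝ) : ℝ := (μ (Set.Ioi x)).toReal

noncomputable def convn (μ : Measure ℝ) : ℕ → Measure ℝ
  | 0 => Measure.dirac 0
  | n + 1 => ((convn μ n).prod μ).map (fun p : ℝ × ℝ => p.1 + p.2)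

lemma tail_def (μ : Measure ℝ) (x : ℝ) : tail μ x = (μ (Set.Ioi x)).toReal := rfl

section Conv

variable (μ : Measure ℝ) [IsProbabilityMeasure μ]

lemma convn_one : convn μ 1 = μ := by
  show (((Measure.dirac 0).prod μ).map (fun p : ℝ × ℝ => p.1 + p.2)) = μ
  rw [Measure.dirac_prod, Measure.map_map (by fun_prop) (by fun_prop)]
  have : ((fun p : ℝ × ℝ => p.1 + p.2) ∘ (Prod.mk (0:ℝ))) = id := by
    funext y; simp
  rw [this, Measure.map_id]

lemma convn_two : convn μ 2 = (μ.prod μ).map (fun p : ℝ × ℝ => p.1 + p.2) := by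
  show ((convn μ 1).prod μ).map _ = _
  rw [convn_one]

instance : IsProbabilityMeasure (convn μ 2) := by
  rw [convn_two]
  exact Measure.isProbabilityMeasure_map (by fun_prop : Measurable fun p : ℝ × ℝ => p.1 + p.2).aemeasurable

end Conv

section Enn

variable (μ : Measure ℝ) [IsProbabilityMeasure μ]

lemma measJ (x r : ℝ) :
    (μ.prod μ) {p : ℝ × ℝ | p.1 ∈ Set.Ioc r (x - r) ∧ x - p.1 < p.2}
      = ∫⁻ a in Set.Ioc r (x - r), μ (Set.Ioi (x - a)) ∂μ := by
  have hS : MeasurableSet {p : ℝ × ℝ | p.1 ∈ Set.Ioc r (x - r) ∧ x - p.1 < p.2} := by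
    apply MeasurableSet.inter
    · exact measurable_fst measurableSet_Ioc
    · exact measurableSet_lt (measurable_const.sub measurable_fst) measurable_snd
  rw [Measure.prod_apply hS, ← lintegral_indicator measurableSet_Ioc (fun a => μ (Set.Ioi (x - a)))]
  congr 1
  funext a
  by_cases ha : a ∈ Set.Ioc r (x - r)
  · rw [Set.indicator_of_mem ha]
    congr 1
    ext b
    simp only [Set.mem_preimage, Set.mem_setOf_eq, Set.mem_Ioi, Set.mem_Ioc] at *
    tauto
  · rw [Set.indicator_of_notMem ha]
    have : (Prod.mk a ⁻¹' {p : ℝ × ℝ | p.1 ∈ Set.Ioc r (x - r) ∧ x - p.1 < p.2}) = ∅ := by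
      ext b
      simp only [Set.mem_preimage, Set.mem_setOf_eq, Set.mem_empty_iff_false, iff_false,
        Set.mem_Ioc] at *
      tauto
    rw [this, measure_empty]

lemma ennA (x r : ℝ) (hr : 0 ≤ r) (hrx : r ≤ x - r) :
    μ (Set.Icc 0 r) * μ (Set.Ioi x) + (∫⁻ a in Set.Ioc r (x - r), μ (Set.Ioi (x - a)) ∂μ)
      + μ (Set.Ioc (x - r) x) * μ (Set.Ioi r) + μ (Set.Ioi x) * μ (Set.Ici 0)
      ≤ (convn μ 2) (Set.Ioi x) := by
  rw [convn_two μ, Measure.map_apply (by fun_prop) measurableSet_Ioi]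
  set S1 : Set (ℝ × ℝ) := Set.Icc 0 r ×ˢ Set.Ioi x with hS1
  set S2 : Set (ℝ × ℝ) := {p : ℝ × ℝ | p.1 ∈ Set.Ioc r (x - r) ∧ x - p.1 < p.2} with hS2
  set S3 : Set (ℝ × ℝ) := Set.Ioc (x - r) x ×ˢ Set.Ioi r with hS3
  set S4 : Set (ℝ × ℝ) := Set.Ioi x ×ˢ Set.Ici 0 with hS4
  have hm2 : MeasurableSet S2 := by
    apply MeasurableSet.inter
    · exact measurable_fst measurableSet_Ioc
    · exact measurableSet_lt (measurable_const.sub measurable_fst) measurable_snd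
  have hm3 : MeasurableSet S3 := (measurableSet_Ioc).prod measurableSet_Ioi
  have hm4 : MeasurableSet S4 := (measurableSet_Ioi).prod measurableSet_Ici
  have hsub : S1 ∪ (S2 ∪ (S3 ∪ S4)) ⊆ (fun p : ℝ × ℝ => p.1 + p.2) ⁻¹' Set.Ioi x := by
    rintro ⟨a, b⟩ hp
    simp only [hS1, hS2, hS3, hS4, Set.mem_union, Set.mem_prod, Set.mem_Icc, Set.mem_Ioi,
      Set.mem_Ioc, Set.mem_Ici, Set.mem_setOf_eq] at hp
    simp only [Set.mem_preimage, Set.mem_Ioi]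
    rcases hp with ⟨⟨h1, h2⟩, h3⟩ | ⟨⟨h1, h2⟩, h3⟩ | ⟨⟨h1, h2⟩, h3⟩ | ⟨h1, h2⟩ <;> linarith
  have hd12 : Disjoint S1 (S2 ∪ (S3 ∪ S4)) := by
    rw [Set.disjoint_left]
    rintro ⟨a, b⟩ hp hq
    simp only [hS1, hS2, hS3, hS4, Set.mem_union, Set.mem_prod, Set.mem_Icc, Set.mem_Ioi,
      Set.mem_Ioc, Set.mem_Ici, Set.mem_setOf_eq] at hp hq
    rcases hq with ⟨⟨h1, h2⟩, h3⟩ | ⟨⟨h1, h2⟩, h3⟩ | ⟨h1, h2⟩ <;> [skip; skip; skip] <;>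
      obtain ⟨⟨hp1, hp2⟩, hp3⟩ := hp <;> linarith
  have hd23 : Disjoint S2 (S3 ∪ S4) := by
    rw [Set.disjoint_left]
    rintro ⟨a, b⟩ hp hq
    simp only [hS2, hS3, hS4, Set.mem_union, Set.mem_prod, Set.mem_Ioi,
      Set.mem_Ioc, Set.mem_Ici, Set.mem_setOf_eq] at hp hq
    obtain ⟨⟨hp1, hp2⟩, hp3⟩ := hp
    rcases hq with ⟨⟨h1, h2⟩, h3⟩ | ⟨h1, h2⟩ <;> linarith
  have hd34 : Disjoint S3 S4 := by
    rw [Set.disjoint_left]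
    rintro ⟨a, b⟩ hp hq
    simp only [hS3, hS4, Set.mem_prod, Set.mem_Ioi, Set.mem_Ioc, Set.mem_Ici] at hp hq
    obtain ⟨⟨hp1, hp2⟩, hp3⟩ := hp
    obtain ⟨h1, h2⟩ := hq
    linarith
  calc μ (Set.Icc 0 r) * μ (Set.Ioi x) + (∫⁻ a in Set.Ioc r (x - r), μ (Set.Ioi (x - a)) ∂μ)
      + μ (Set.Ioc (x - r) x) * μ (Set.Ioi r) + μ (Set.Ioi x) * μ (Set.Ici 0)
      = (μ.prod μ) (S1 ∪ (S2 ∪ (S3 ∪ S4))) := by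
        rw [measure_union hd12 (hm2.union (hm3.union hm4)), measure_union hd23 (hm3.union hm4),
          measure_union hd34 hm4, hS1, hS3, hS4, Measure.prod_prod, Measure.prod_prod,
          Measure.prod_prod, ← measJ μ x r]
        ring
    _ ≤ _ := measure_mono hsub

lemma ennB (x r : ℝ) (hr : 0 ≤ r) (hrx : r ≤ x - r) :
    μ (Set.Icc 0 (x - r)) * μ (Set.Ioi x) + μ (Set.Ioc (x - r) x) * μ (Set.Ioi r)
      + μ (Set.Ioi x) * μ (Set.Ici 0) ≤ (convn μ 2) (Set.Ioi x) := by
  rw [convn_two μ, Measure.map_apply (by fun_prop) measurableSet_Ioi]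
  set S1 : Set (ℝ × ℝ) := Set.Icc 0 (x - r) ×ˢ Set.Ioi x with hS1
  set S3 : Set (ℝ × ℝ) := Set.Ioc (x - r) x ×ˢ Set.Ioi r with hS3
  set S4 : Set (ℝ × ℝ) := Set.Ioi x ×ˢ Set.Ici 0 with hS4
  have hm3 : MeasurableSet S3 := (measurableSet_Ioc).prod measurableSet_Ioi
  have hm4 : MeasurableSet S4 := (measurableSet_Ioi).prod measurableSet_Ici
  have hsub : S1 ∪ (S3 ∪ S4) ⊆ (fun p : ℝ × ℝ => p.1 + p.2) ⁻¹' Set.Ioi x := by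
    rintro ⟨a, b⟩ hp
    simp only [hS1, hS3, hS4, Set.mem_union, Set.mem_prod, Set.mem_Icc, Set.mem_Ioi,
      Set.mem_Ioc, Set.mem_Ici] at hp
    simp only [Set.mem_preimage, Set.mem_Ioi]
    rcases hp with ⟨⟨h1, h2⟩, h3⟩ | ⟨⟨h1, h2⟩, h3⟩ | ⟨h1, h2⟩ <;> linarith
  have hd13 : Disjoint S1 (S3 ∪ S4) := by
    rw [Set.disjoint_left]
    rintro ⟨a, b⟩ hp hq
    simp only [hS1, hS3, hS4, Set.mem_union, Set.mem_prod, Set.mem_Icc, Set.mem_Ioi,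
      Set.mem_Ioc, Set.mem_Ici] at hp hq
    obtain ⟨⟨hp1, hp2⟩, hp3⟩ := hp
    rcases hq with ⟨⟨h1, h2⟩, h3⟩ | ⟨h1, h2⟩ <;> linarith
  have hd34 : Disjoint S3 S4 := by
    rw [Set.disjoint_left]
    rintro ⟨a, b⟩ hp hq
    simp only [hS3, hS4, Set.mem_prod, Set.mem_Ioi, Set.mem_Ioc, Set.mem_Ici] at hp hq
    obtain ⟨⟨hp1, hp2⟩, hp3⟩ := hp
    obtain ⟨h1, h2⟩ := hq
    linarith
  calc μ (Set.Icc 0 (x - r)) * μ (Set.Ioi x) + μ (Set.Ioc (x - r) x) * μ (Set.Ioi r)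
      + μ (Set.Ioi x) * μ (Set.Ici 0)
      = (μ.prod μ) (S1 ∪ (S3 ∪ S4)) := by
        rw [measure_union hd13 (hm3.union hm4), measure_union hd34 hm4, hS1, hS3, hS4,
          Measure.prod_prod, Measure.prod_prod, Measure.prod_prod]
        ring
    _ ≤ _ := measure_mono hsub

end Enn

section Tail

variable (μ : Measure ℝ) [IsProbabilityMeasure μ]

lemma tail_nonneg (x : ℝ) : 0 ≤ tail μ x := ENNReal.toReal_nonneg

lemma tail_le_one (x : ℝ) : tail μ x ≤ 1 := by
  rw [tail, show (1:ℝ) = (1:ℝ≥0∞).toReal by simp]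
  exact ENNReal.toReal_mono ENNReal.one_ne_top prob_le_one

lemma tail_anti : Antitone (tail μ) := by
  intro a b hab
  exact ENNReal.toReal_mono (measure_ne_top μ _) (measure_mono (Set.Ioi_subset_Ioi hab))

lemma tail_pos (hunb : ∀ x, 0 < μ (Set.Ioi x)) (x : ℝ) : 0 < tail μ x :=
  ENNReal.toReal_pos (hunb x).ne' (measure_ne_top μ _)

lemma meas_Ici (hsupp : μ (Set.Iio 0) = 0) : μ (Set.Ici 0) = 1 := by
  have := measure_compl (μ := μ) (s := Set.Iio 0) measurableSet_Iio (measure_ne_top μ _)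
  rw [compl_Iio, hsupp, measure_univ] at this
  simpa using this

lemma toReal_Icc (hsupp : μ (Set.Iio 0) = 0) (r : ℝ) (hr : 0 ≤ r) :
    (μ (Set.Icc 0 r)).toReal = 1 - tail μ r := by
  have hu : Set.Icc 0 r ∪ Set.Ioi r = Set.Ici 0 := Set.Icc_union_Ioi_eq_Ici hr
  have hd : Disjoint (Set.Icc 0 r) (Set.Ioi r) := by
    rw [Set.disjoint_left]; intro a ha hb
    exact absurd ha.2 (not_le.mpr hb)
  have := measure_union (μ := μ) hd measurableSet_Ioi
  rw [hu, meas_Ici μ hsupp] at this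
  have h2 := congrArg ENNReal.toReal this
  rw [ENNReal.toReal_add (measure_ne_top μ _) (measure_ne_top μ _)] at h2
  simp only [ENNReal.toReal_one] at h2
  rw [tail]; linarith

lemma toReal_Ioc (a b : ℝ) (hab : a ≤ b) :
    (μ (Set.Ioc a b)).toReal = tail μ a - tail μ b := by
  have hu : Set.Ioc a b ∪ Set.Ioi b = Set.Ioi a := Set.Ioc_union_Ioi_eq_Ioi hab
  have hd : Disjoint (Set.Ioc a b) (Set.Ioi b) := by
    rw [Set.disjoint_left]; intro t ht hb'
    exact absurd ht.2 (not_le.mpr hb')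
  have := measure_union (μ := μ) hd measurableSet_Ioi
  rw [hu] at this
  have h2 := congrArg ENNReal.toReal this
  rw [ENNReal.toReal_add (measure_ne_top μ _) (measure_ne_top μ _)] at h2
  rw [tail, tail]; linarith

lemma tail_tendsto_zero : Tendsto (tail μ) atTop (nhds 0) := by
  have hnat : Tendsto (fun n : ℕ => μ (Set.Ioi (n : ℝ))) atTop (nhds 0) := by
    have h := MeasureTheory.tendsto_measure_iInter_atTop (μ := μ)
      (s := fun n : ℕ => Set.Ioi (n : ℝ))
      (fun n => measurableSet_Ioi.nullMeasurableSet)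
      (fun m n hmn => Set.Ioi_subset_Ioi (by exact_mod_cast hmn))
      ⟨0, measure_ne_top μ _⟩
    have : ⋂ n : ℕ, Set.Ioi ((n : ℝ)) = ∅ := by
      ext t
      simp only [Set.mem_iInter, Set.mem_Ioi, Set.mem_empty_iff_false, iff_false, not_forall,
        not_lt]
      obtain ⟨n, hn⟩ := exists_nat_gt t
      exact ⟨n, hn.le⟩
    rw [this, measure_empty] at h
    exact h
  rw [Metric.tendsto_atTop]
  intro ε hε
  have hε' : (0:ℝ≥0∞) < ENNReal.ofReal ε := by simp [hε]
  have : ∀ᶠ n : ℕ in atTop, μ (Set.Ioi (n:ℝ)) < ENNReal.ofReal ε := by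
    exact hnat.eventually_lt_const hε'
  obtain ⟨N, hN⟩ := this.exists
  refine ⟨N, fun x hx => ?_⟩
  rw [Real.dist_eq, abs_of_nonneg (by linarith [tail_nonneg μ x, tail_nonneg μ x] : (0:ℝ) ≤ tail μ x - 0)]
  have h1 : tail μ x ≤ tail μ N := tail_anti μ hx
  have h2 : tail μ (N:ℝ) < ε := by
    rw [tail]
    rw [← ENNReal.ofReal_toReal (measure_ne_top μ (Set.Ioi (N:ℝ)))] at hN
    exact (ENNReal.ofReal_lt_ofReal_iff hε).mp hN
  linarith

end Tail

noncomputable def tseq (u : ℕ → ℝ) : ℕ → ℝ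
  | 0 => max (u 0) 2
  | n + 1 => max (u (n + 1)) (max (2 * tseq u n) (2 * ((n : ℝ) + 2)))

noncomputable def gseq (u : ℕ → ℝ) (n : ℕ) : ℝ := tseq u (n + 1) - tseq u n

noncomputable def lseq (u : ℕ → ℝ) (n : ℕ) (z : ℝ) : ℝ :=
  ((n : ℝ) + 1) + (z - tseq u (n + 1)) / gseq u n

variable (u : ℕ → ℝ)

lemma tseq_ge (n : ℕ) : 2 * ((n : ℝ) + 1) ≤ tseq u n := by
  cases n with
  | zero =>
    have h := le_max_right (u 0) (2:ℝ)
    rw [tseq]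
    push_cast
    linarith
  | succ m =>
    have : (2 * ((m : ℝ) + 2)) ≤ tseq u (m + 1) :=
      le_trans (le_max_right _ _) (le_max_right _ _)
    push_cast
    linarith

lemma tseq_succ_ge (n : ℕ) : 2 * tseq u n ≤ tseq u (n + 1) :=
  le_trans (le_max_left _ _) (le_max_right _ _)

lemma tseq_ge_u (n : ℕ) : u n ≤ tseq u n := by
  cases n with
  | zero => exact le_max_left _ _
  | succ m => exact le_max_left _ _

lemma tseq_pos (n : ℕ) : 2 ≤ tseq u n := by
  have h1 := tseq_ge u n
  have h2 : (0:ℝ) ≤ n := Nat.cast_nonneg n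
  nlinarith

lemma gseq_ge (n : ℕ) : tseq u n ≤ gseq u n := by
  have := tseq_succ_ge u n
  rw [gseq]; linarith

lemma gseq_pos (n : ℕ) : 0 < gseq u n :=
  lt_of_lt_of_le (by linarith [tseq_pos u n]) (gseq_ge u n)

lemma gseq_mono : Monotone (gseq u) := by
  apply monotone_nat_of_le_succ
  intro n
  have h1 : tseq u (n + 1) ≤ gseq u (n + 1) := gseq_ge u (n + 1)
  have h2 : 2 ≤ tseq u n := tseq_pos u n
  have h3 : gseq u n = tseq u (n + 1) - tseq u n := rfl
  linarith

lemma tseq_lower (m k : ℕ) : tseq u (m + 1) + k * gseq u m ≤ tseq u (m + 1 + k) := by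
  induction k with
  | zero => simp
  | succ k ih =>
    have h1 : gseq u m ≤ gseq u (m + 1 + k) := gseq_mono u (by omega)
    have h2 : tseq u (m + 1 + k) + gseq u (m + 1 + k) = tseq u (m + 1 + k + 1) := by
      rw [gseq]; ring
    push_cast
    have : m + 1 + (k + 1) = (m + 1 + k) + 1 := by omega
    rw [this, ← h2]
    push_cast at ih
    linarith

lemma tseq_upper (a k : ℕ) : tseq u (a + k + 1) - tseq u a ≤ ((k : ℝ) + 1) * gseq u (a + k) := by
  induction k with
  | zero => simp [gseq]
  | succ k ih =>
    have h1 : gseq u (a + k) ≤ gseq u (a + k + 1) := gseq_mono u (by omega)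
    have h2 : tseq u (a + k + 1 + 1) - tseq u (a + k + 1) = gseq u (a + k + 1) := by
      rw [gseq]
    have : a + (k + 1) + 1 = a + k + 1 + 1 := by omega
    rw [this]
    push_cast
    have h3 : (0:ℝ) ≤ k := Nat.cast_nonneg k
    have : a + (k+1) = a + k + 1 := by omega
    rw [this]
    nlinarith

lemma lseq_key (m n : ℕ) (z : ℝ) (hz : tseq u n ≤ z) : (n : ℝ) ≤ lseq u m z := by
  have hg : 0 < gseq u m := gseq_pos u m
  have hstep : (n : ℝ) * gseq u m ≤ ((m : ℝ) + 1) * gseq u m + (tseq u n - tseq u (m + 1)) := by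
    rcases le_or_gt n (m + 1) with hnm | hnm
    · rcases Nat.eq_or_lt_of_le hnm with he | hlt
      · rw [he]; push_cast; nlinarith
      · have hn_le : n ≤ m := by omega
        have hk := tseq_upper u n (m - n)
        have he1 : n + (m - n) = m := by omega
        rw [he1] at hk
        have hc : ((m - n : ℕ) : ℝ) = (m : ℝ) - n := by
          rw [Nat.cast_sub hn_le]
        rw [hc] at hk
        nlinarith
    · have hk := tseq_lower u m (n - (m + 1))
      have he1 : m + 1 + (n - (m + 1)) = n := by omega
      rw [he1] at hk
      have hc : ((n - (m + 1) : ℕ) : ℝ) = (n : ℝ) - ((m : ℝ) + 1) := by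
        rw [Nat.cast_sub (by omega)]; push_cast; ring
      rw [hc] at hk
      nlinarith
  rw [lseq, ← sub_le_iff_le_add']
  rw [le_div_iff₀ hg]
  nlinarith

noncomputable def hfun (u : ℕ → ℝ) (z : ℝ) : ℝ := ⨅ m : ℕ, lseq u m z

lemma lseq_mono (m : ℕ) : Monotone (lseq u m) := by
  intro a b hab
  rw [lseq, lseq]
  have hg : 0 < gseq u m := gseq_pos u m
  have h0 : 0 ≤ (b - a) / gseq u m := div_nonneg (by linarith) hg.le
  have heq : (b - tseq u (m + 1)) / gseq u m
      = (a - tseq u (m + 1)) / gseq u m + (b - a) / gseq u m := by ring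
  linarith

lemma hfun_bdd (z : ℝ) : BddBelow (Set.range fun m => lseq u m z) := by
  refine ⟨min 0 ((z - tseq u 0) / gseq u 0), ?_⟩
  rintro y ⟨m, rfl⟩
  rcases le_or_gt (tseq u 0) z with hz | hz
  · have h0 : ((0 : ℕ) : ℝ) ≤ lseq u m z := lseq_key u m 0 z hz
    simp only [Nat.cast_zero] at h0
    exact le_trans (min_le_left _ _) h0
  · have h1 : ((0 : ℕ) : ℝ) ≤ lseq u m (tseq u 0) := lseq_key u m 0 _ le_rfl
    simp only [Nat.cast_zero] at h1
    have hgm : 0 < gseq u m := gseq_pos u m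
    have hg0 : 0 < gseq u 0 := gseq_pos u 0
    have hg0m : gseq u 0 ≤ gseq u m := gseq_mono u (Nat.zero_le m)
    have heq : lseq u m z = lseq u m (tseq u 0) + (z - tseq u 0) / gseq u m := by
      rw [lseq, lseq]; field_simp; ring
    have hdiv : (z - tseq u 0) / gseq u 0 ≤ (z - tseq u 0) / gseq u m := by
      rw [div_le_div_iff₀ hg0 hgm]
      nlinarith
    refine le_trans (min_le_right _ _) ?_
    show (z - tseq u 0) / gseq u 0 ≤ lseq u m z
    rw [heq]
    linarith
  
lemma hfun_le (m : ℕ) (z : ℝ) : hfun u z ≤ lseq u m z := ciInf_le (hfun_bdd u z) m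

lemma hfun_ge (n : ℕ) (z : ℝ) (hz : tseq u n ≤ z) : (n : ℝ) ≤ hfun u z :=
  le_ciInf fun m => lseq_key u m n z hz

lemma hfun_mono : Monotone (hfun u) := by
  intro a b hab
  exact le_ciInf fun m => le_trans (hfun_le u m a) (lseq_mono u m hab)

lemma hfun_concave : ConcaveOn ℝ Set.univ (hfun u) := by
  refine ⟨convex_univ, ?_⟩
  intro x _ y _ a b ha hb hab
  refine le_ciInf fun m => ?_
  have hx := hfun_le u m x
  have hy := hfun_le u m y
  have hgm : gseq u m ≠ 0 := (gseq_pos u m).ne'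
  have heq : lseq u m (a * x + b * y) = a * lseq u m x + b * lseq u m y := by
    rw [lseq, lseq, lseq]
    linear_combination (tseq u (m + 1) / gseq u m - ((m : ℝ) + 1)) * hab
  simp only [smul_eq_mul]
  rw [heq]
  have := mul_le_mul_of_nonneg_left hx ha
  have := mul_le_mul_of_nonneg_left hy hb
  linarith

lemma hfun_tendsto : Tendsto (hfun u) atTop atTop := by
  rw [tendsto_atTop]
  intro b
  obtain ⟨n, hn⟩ := exists_nat_ge b
  rw [eventually_atTop]
  exact ⟨tseq u n, fun z hz => le_trans hn (hfun_ge u n z hz)⟩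

lemma hfun_between (z : ℝ) (hz : tseq u 0 ≤ z) :
    ∃ n : ℕ, tseq u n ≤ z ∧ z < tseq u (n + 1) ∧ hfun u z ≤ (n : ℝ) + 1 := by
  have hex : ∃ n, z < tseq u n := by
    obtain ⟨n, hn⟩ := exists_nat_ge z
    refine ⟨n, lt_of_le_of_lt hn ?_⟩
    have := tseq_ge u n
    linarith
  have hNpos : Nat.find hex ≠ 0 := by
    intro h0
    have := Nat.find_spec hex
    rw [h0] at this
    linarith
  obtain ⟨n, hn⟩ : ∃ n, Nat.find hex = n + 1 := ⟨Nat.find hex - 1, by omega⟩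
  have h1 : ¬ z < tseq u n := Nat.find_min hex (by omega)
  have h2 : z < tseq u (n + 1) := by
    have := Nat.find_spec hex
    rwa [hn] at this
  refine ⟨n, not_lt.mp h1, h2, ?_⟩
  refine le_trans (hfun_le u n z) ?_
  rw [lseq]
  have hg : 0 < gseq u n := gseq_pos u n
  have : (z - tseq u (n + 1)) / gseq u n ≤ 0 :=
    div_nonpos_of_nonpos_of_nonneg (by linarith) hg.le
  linarith

lemma hfun_le_half (z : ℝ) (hz : tseq u 0 ≤ z) : hfun u z ≤ z / 2 := by
  obtain ⟨n, h1, h2, h3⟩ := hfun_between u z hz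
  have := tseq_ge u n
  linarith

lemma hfun_nonneg (z : ℝ) (hz : tseq u 0 ≤ z) : 0 ≤ hfun u z := by
  have := hfun_ge u 0 z hz
  simpa using this


section Real

variable (μ : Measure ℝ) [IsProbabilityMeasure μ]

lemma Jfin (x r : ℝ) : (∫⁻ a in Set.Ioc r (x - r), μ (Set.Ioi (x - a)) ∂μ) ≠ ⊤ := by
  have h1 : (∫⁻ a in Set.Ioc r (x - r), μ (Set.Ioi (x - a)) ∂μ)
      ≤ ∫⁻ _ in Set.Ioc r (x - r), 1 ∂μ := lintegral_mono fun a => prob_le_one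
  rw [setLIntegral_one] at h1
  exact ne_top_of_le_ne_top (measure_ne_top μ _) h1

lemma realA (hsupp : μ (Set.Iio 0) = 0) (x r : ℝ) (hr : 0 ≤ r) (hrx : r ≤ x - r) :
    (1 - tail μ r) * tail μ x + (∫⁻ a in Set.Ioc r (x - r), μ (Set.Ioi (x - a)) ∂μ).toReal
      + (tail μ (x - r) - tail μ x) * tail μ r + tail μ x ≤ tail (convn μ 2) x := by
  have h1 := ennA μ x r hr hrx
  have h2 := ENNReal.toReal_mono (measure_ne_top _ _) h1
  have hab : μ (Set.Icc 0 r) * μ (Set.Ioi x) ≠ ⊤ :=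
    ENNReal.mul_ne_top (measure_ne_top μ _) (measure_ne_top μ _)
  have hcd : μ (Set.Ioc (x - r) x) * μ (Set.Ioi r) ≠ ⊤ :=
    ENNReal.mul_ne_top (measure_ne_top μ _) (measure_ne_top μ _)
  have hef : μ (Set.Ioi x) * μ (Set.Ici 0) ≠ ⊤ :=
    ENNReal.mul_ne_top (measure_ne_top μ _) (measure_ne_top μ _)
  have hJ := Jfin μ x r
  rw [ENNReal.toReal_add (ENNReal.add_ne_top.mpr ⟨ENNReal.add_ne_top.mpr ⟨hab, hJ⟩, hcd⟩) hef,
    ENNReal.toReal_add (ENNReal.add_ne_top.mpr ⟨hab, hJ⟩) hcd,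
    ENNReal.toReal_add hab hJ, ENNReal.toReal_mul, ENNReal.toReal_mul, ENNReal.toReal_mul,
    toReal_Icc μ hsupp r hr, toReal_Ioc μ (x - r) x (by linarith), meas_Ici μ hsupp] at h2
  simp only [ENNReal.toReal_one, mul_one] at h2
  simp only [← tail_def] at h2 ⊢
  linarith

lemma realB (hsupp : μ (Set.Iio 0) = 0) (x r : ℝ) (hr : 0 ≤ r) (hrx : r ≤ x - r) :
    (1 - tail μ (x - r)) * tail μ x + (tail μ (x - r) - tail μ x) * tail μ r + tail μ x
      ≤ tail (convn μ 2) x := by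
  have h1 := ennB μ x r hr hrx
  have h2 := ENNReal.toReal_mono (measure_ne_top _ _) h1
  have hab : μ (Set.Icc 0 (x - r)) * μ (Set.Ioi x) ≠ ⊤ :=
    ENNReal.mul_ne_top (measure_ne_top μ _) (measure_ne_top μ _)
  have hcd : μ (Set.Ioc (x - r) x) * μ (Set.Ioi r) ≠ ⊤ :=
    ENNReal.mul_ne_top (measure_ne_top μ _) (measure_ne_top μ _)
  have hef : μ (Set.Ioi x) * μ (Set.Ici 0) ≠ ⊤ :=
    ENNReal.mul_ne_top (measure_ne_top μ _) (measure_ne_top μ _)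
  rw [ENNReal.toReal_add (ENNReal.add_ne_top.mpr ⟨hab, hcd⟩) hef,
    ENNReal.toReal_add hab hcd, ENNReal.toReal_mul, ENNReal.toReal_mul, ENNReal.toReal_mul,
    toReal_Icc μ hsupp (x - r) (by linarith), toReal_Ioc μ (x - r) x (by linarith),
    meas_Ici μ hsupp] at h2
  simp only [ENNReal.toReal_one, mul_one] at h2
  simp only [← tail_def] at h2 ⊢
  linarith

lemma integral_eq_J (x r : ℝ) :
    (∫ y in Set.Ioc r (x - r), tail μ (x - y) / tail μ x ∂μ)
      = (∫⁻ a in Set.Ioc r (x - r), μ (Set.Ioi (x - a)) ∂μ).toReal / tail μ x := by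
  rw [integral_div]
  congr 1
  have hmeas : Measurable fun y : ℝ => μ (Set.Ioi (x - y)) := by
    have h1 : Antitone fun t : ℝ => μ (Set.Ioi t) := fun a b hab =>
      measure_mono (Set.Ioi_subset_Ioi hab)
    have h2 : Measurable fun t : ℝ => μ (Set.Ioi t) := h1.measurable
    exact h2.comp (measurable_const.sub measurable_id)
  have := MeasureTheory.integral_toReal (μ := μ.restrict (Set.Ioc r (x - r)))
    (f := fun y => μ (Set.Ioi (x - y))) hmeas.aemeasurable
    (Filter.Eventually.of_forall fun y => measure_lt_top μ _)
  exact this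

end Real

/-- Lemma 1 (forward direction): if F is subexponential and c > 1, there is an
increasing concave function h(x) → ∞, with h(x) ≤ x/2 for large x, and x₁ > 0
such that for all x ≥ x₁: J(x,h(x)) ≤ c F̄(h(x)) and K(x,h(x)) ≤ F̄(h(x)). -/
theorem subexp_exists_h (μ : Measure ℝ) [IsProbabilityMeasure μ]
    (hsupp : μ (Set.Iio 0) = 0) (hunb : ∀ x, 0 < μ (Set.Ioi x))
    (hsub : Tendsto (fun x => tail (convn μ 2) x / tail μ x) atTop (nhds 2))
    (c : ℝ) (hc : 1 < c) :
    ∃ h : ℝ → ℝ, Monotone h ∧ ConcaveOn ℝ Set.univ h ∧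
      Tendsto h atTop atTop ∧ (∀ᶠ x in atTop, h x ≤ x / 2) ∧
      ∃ x₁ : ℝ, 0 < x₁ ∧ ∀ x : ℝ, x₁ ≤ x →
        (∫ y in Set.Ioc (h x) (x - h x), tail μ (x - y) / tail μ x ∂μ) ≤
          c * tail μ (h x) ∧
        tail μ (x - h x) / tail μ x - 1 ≤ tail μ (h x) := by
  have hTx : ∀ x, 0 < tail μ x := tail_pos μ hunb
  have hβpos : ∀ n : ℕ, 0 < tail μ ((n:ℝ)+1) := fun n => hTx _
  have hβle1 : ∀ n : ℕ, tail μ ((n:ℝ)+1) ≤ 1 := fun n => tail_le_one μ _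
  have hev : ∀ n : ℕ, ∃ u : ℝ, ∀ x ≥ u,
      tail (convn μ 2) x ≤ (2 + (c-1) * tail μ ((n:ℝ)+1)) * tail μ x ∧
      tail (convn μ 2) x ≤ (2 + (tail μ ((n:ℝ)+1))^2/4) * tail μ x ∧
      tail μ x ≤ (tail μ ((n:ℝ)+1))^2/8 := by
    intro n
    have h1 : ∀ᶠ x in atTop, tail (convn μ 2) x / tail μ x < 2 + (c-1) * tail μ ((n:ℝ)+1) :=
      hsub.eventually_lt_const
        (by nlinarith [mul_pos (by linarith : (0:ℝ) < c - 1) (hβpos n)])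
    have h2 : ∀ᶠ x in atTop, tail (convn μ 2) x / tail μ x < 2 + (tail μ ((n:ℝ)+1))^2/4 :=
      hsub.eventually_lt_const (by nlinarith [hβpos n])
    have h3 : ∀ᶠ x in atTop, tail μ x < (tail μ ((n:ℝ)+1))^2/8 :=
      (tail_tendsto_zero μ).eventually_lt_const (by nlinarith [hβpos n])
    obtain ⟨u, hu⟩ := eventually_atTop.mp ((h1.and h2).and h3)
    refine ⟨u, fun x hx => ?_⟩
    obtain ⟨⟨ha, hb⟩, hcc⟩ := hu x hx
    have hx0 := hTx x
    refine ⟨?_, ?_, hcc.le⟩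
    · rw [div_lt_iff₀ hx0] at ha; linarith
    · rw [div_lt_iff₀ hx0] at hb; linarith
  choose uu huu using hev
  refine ⟨hfun uu, hfun_mono uu, hfun_concave uu, hfun_tendsto uu,
    eventually_atTop.mpr ⟨tseq uu 0, fun z hz => hfun_le_half uu z hz⟩,
    tseq uu 0, by linarith [tseq_pos uu 0], ?_⟩
  intro x hx
  obtain ⟨n, hn1, hn2, hle⟩ := hfun_between uu x hx
  set r := hfun uu x with hrdef
  have hr0 : 0 ≤ r := hfun_nonneg uu x hx
  have hrhalf : r ≤ x / 2 := hfun_le_half uu x hx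
  have hrx : r ≤ x - r := by linarith
  have hxu : uu n ≤ x := le_trans (tseq_ge_u uu n) hn1
  obtain ⟨hP1, hP2, hP3⟩ := huu n x hxu
  have hβr : tail μ ((n:ℝ)+1) ≤ tail μ r := tail_anti μ hle
  have hx0 : 0 < tail μ x := hTx x
  have hTr0 : 0 ≤ tail μ r := (hTx r).le
  have hTr1 : tail μ r ≤ 1 := tail_le_one μ r
  have hTxr : tail μ x ≤ tail μ (x - r) := tail_anti μ (by linarith)
  have hA := realA μ hsupp x r hr0 hrx
  have hB := realB μ hsupp x r hr0 hrx
  have hb0 := hβpos n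
  have hb1 := hβle1 n
  constructor
  · rw [integral_eq_J μ x r, div_le_iff₀ hx0]
    have e1 : (c-1)*(tail μ ((n:ℝ)+1)*tail μ x) ≤ (c-1)*(tail μ r*tail μ x) :=
      mul_le_mul_of_nonneg_left (mul_le_mul_of_nonneg_right hβr hx0.le) (by linarith)
    have e2 : 0 ≤ (tail μ (x-r) - tail μ x)*tail μ r := mul_nonneg (by linarith) hTr0
    nlinarith [hA, hP1, e1, e2]
  · have h1 : tail μ (x-r)*(tail μ r - tail μ x)
        ≤ ((tail μ ((n:ℝ)+1))^2/4)*tail μ x + tail μ r*tail μ x := by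
      nlinarith [hB, hP2]
    have h2 : ((tail μ ((n:ℝ)+1))^2/4)*tail μ x + tail μ r*tail μ x
        ≤ (1+tail μ r)*tail μ x*(tail μ r - tail μ x) := by
      nlinarith [mul_le_mul hβr hβr hb0.le hTr0, hP3,
        mul_le_mul_of_nonneg_left hTr1 hx0.le, hx0]
    have h3 : 0 < tail μ r - tail μ x := by nlinarith [hβr, hP3]
    have h4 : tail μ (x-r) ≤ (1+tail μ r)*tail μ x :=
      le_of_mul_le_mul_right (h1.trans h2) h3
    rw [sub_le_iff_le_add, div_le_iff₀ hx0]
    linarith
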